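/- arXiv:2402.13565 — 2 statements merged into one kernel-verified Lean document; each statement's English description precedes it below -/
import Mathlib

section
/- For every real number t, the plane-wave expansion (Jacobi–Anger identity) holds: e^{i t cos θ} = J_0(t) + Σ_{s ∈ ℤ, s ≠ 0} i^s J_s(t) e^{i s θ}, where J_s denotes the Bessel function of the first kind of integer order s. -/
open Complex Real Filter MeasureTheory

/-- Bessel function of the first kind of integer order, defined by its power series
for nonnegative order and extended by `J_{-s} = (-1)^s J_s`. -/
noncomputable def besselJ (s : ℤ) (x : ℝ) : ℝ :=
  if 0 ≤ s then
    ∑' m : ℕ, ((-1 : ℝ) ^ m / ((Nat.factorial m : ℝ) * (Nat.factorial (m + s.toNat) : ℝ)))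
      * (x / 2) ^ (2 * m + s.toNat)
  else
    (-1 : ℝ) ^ s.natAbs *
      ∑' m : ℕ, ((-1 : ℝ) ^ m / ((Nat.factorial m : ℝ) * (Nat.factorial (m + s.natAbs) : ℝ)))
        * (x / 2) ^ (2 * m + s.natAbs)

open Nat in
private def jaEquiv : ℕ × ℕ ≃ Σ _ : ℤ, ℕ where
  toFun p := ⟨(p.1 : ℤ) - (p.2 : ℤ), min p.1 p.2⟩
  invFun x := (x.2 + x.1.toNat, x.2 + (-x.1).toNat)
  left_inv p := by
    obtain ⟨n, m⟩ := p
    simp only [Prod.mk.injEq]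
    constructor <;> omega
  right_inv x := by
    obtain ⟨s, k⟩ := x
    have h1 : ((k + s.toNat : ℕ) : ℤ) - ((k + (-s).toNat : ℕ) : ℤ) = s := by push_cast; omega
    have h2 : min (k + s.toNat) (k + (-s).toNat) = k := by omega
    simp only [h1, h2]

open Nat in
private lemma ja_pow_eq (t : ℝ) (z : ℂ) (hz0 : z ≠ 0) (k σ : ℕ) :
    ((t:ℂ)/2 * z) ^ (k + σ) * ((-((t:ℂ)/2)) * z⁻¹) ^ k
      = ((t:ℂ)/2) ^ (2*k+σ) * (-1) ^ k * z ^ σ := by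
  have hzk : z ^ (k + σ) * (z ^ k)⁻¹ = z ^ σ := by
    rw [pow_add]; field_simp
  have hp : ((t:ℂ)/2) ^ (k + σ) * ((t:ℂ)/2) ^ k = ((t:ℂ)/2) ^ (2*k+σ) := by
    rw [← pow_add]; congr 1; omega
  calc ((t:ℂ)/2 * z) ^ (k + σ) * ((-((t:ℂ)/2)) * z⁻¹) ^ k
      = (((t:ℂ)/2) ^ (k + σ) * ((t:ℂ)/2) ^ k) * (-1) ^ k * (z ^ (k + σ) * (z ^ k)⁻¹) := by
        rw [mul_pow, mul_pow, neg_pow ((t:ℂ)/2), inv_pow]; ring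
    _ = ((t:ℂ)/2) ^ (2*k+σ) * (-1) ^ k * z ^ σ := by rw [hzk, hp]

open Nat in
private lemma ja_inner_sum (t : ℝ) (z : ℂ) (hz0 : z ≠ 0) (s : ℤ) :
    (∑' k : ℕ, ((t:ℂ)/2 * z) ^ (k + s.toNat) / ((k + s.toNat)! : ℂ) *
      (((-((t:ℂ)/2)) * z⁻¹) ^ (k + (-s).toNat) / ((k + (-s).toNat)! : ℂ)))
      = z ^ s * (besselJ s t : ℂ) := by
  rcases le_or_gt 0 s with hs | hs
  · lift s to ℕ using hs with σ
    have h1 : ((σ:ℤ)).toNat = σ := Int.toNat_natCast σ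
    have h2 : ((-(σ:ℤ))).toNat = 0 := by omega
    rw [besselJ, if_pos (Int.natCast_nonneg σ), Complex.ofReal_tsum, ← tsum_mul_left]
    apply tsum_congr
    intro k
    simp only [h1, h2, add_zero, zpow_natCast]
    have h := ja_pow_eq t z hz0 k σ
    push_cast
    rw [_root_.div_mul_div_comm, h]
    ring
  · obtain ⟨σ, rfl⟩ := Int.exists_eq_neg_ofNat (le_of_lt hs)
    have h1 : ((-(σ:ℤ))).toNat = 0 := by omega
    have h2' : (-(-(σ:ℤ))).toNat = σ := by omega
    have h3 : (-(σ:ℤ)).natAbs = σ := by omega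
    have hzs : z ^ (-(σ:ℤ)) = (z ^ σ)⁻¹ := by rw [zpow_neg, zpow_natCast]
    rw [besselJ, if_neg (by omega), Complex.ofReal_mul, Complex.ofReal_tsum,
      ← tsum_mul_left, ← tsum_mul_left]
    apply tsum_congr
    intro k
    simp only [h1, h2', h3, add_zero, hzs]
    have h := ja_pow_eq t z⁻¹ (inv_ne_zero hz0) k σ
    rw [inv_inv] at h
    have h4 : ((t:ℂ)/2 * z) ^ k * ((-((t:ℂ)/2)) * z⁻¹) ^ (k + σ)
        = ((t:ℂ)/2) ^ (2*k+σ) * (-1) ^ (k + σ) * (z ^ σ)⁻¹ := by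
      calc ((t:ℂ)/2 * z) ^ k * ((-((t:ℂ)/2)) * z⁻¹) ^ (k + σ)
          = (-1:ℂ) ^ σ * (((t:ℂ)/2 * z⁻¹) ^ (k + σ) * ((-((t:ℂ)/2)) * z) ^ k) := by
            rw [mul_pow, mul_pow, mul_pow, mul_pow, neg_pow ((t:ℂ)/2) k,
              neg_pow ((t:ℂ)/2) (k+σ), pow_add ((-1:ℂ)) k σ]
            ring
        _ = (-1:ℂ) ^ σ * (((t:ℂ)/2) ^ (2*k+σ) * (-1) ^ k * (z⁻¹) ^ σ) := by rw [h]
        _ = ((t:ℂ)/2) ^ (2*k+σ) * (-1) ^ (k + σ) * (z ^ σ)⁻¹ := by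
            rw [inv_pow, pow_add]; ring
    push_cast
    rw [_root_.div_mul_div_comm, h4]
    ring

open Nat in
set_option maxHeartbeats 1000000 in
/-- Jacobi–Anger (plane-wave) expansion. -/
theorem stmt0 (t θ : ℝ) :
    Complex.exp (Complex.I * t * Real.cos θ) =
      (besselJ 0 t : ℂ) +
        ∑' s : {s : ℤ // s ≠ 0},
          Complex.I ^ (s : ℤ) * (besselJ s t : ℂ) *
            Complex.exp (Complex.I * (s : ℤ) * θ) := by
  have hz0 : (Complex.I * Complex.exp (θ * Complex.I)) ≠ 0 :=
    mul_ne_zero Complex.I_ne_zero (Complex.exp_ne_zero _)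
  set z : ℂ := Complex.I * Complex.exp (θ * Complex.I) with hzdef
  set a : ℂ := (t:ℂ)/2 * z with ha
  set b : ℂ := (-((t:ℂ)/2)) * z⁻¹ with hb
  have hnorm : ∀ (c : ℂ), Summable fun n : ℕ => ‖c ^ n / (n ! : ℂ)‖ := by
    intro c
    have : ∀ n : ℕ, ‖c ^ n / (n ! : ℂ)‖ = ‖c‖ ^ n / (n ! : ℝ) := by
      intro n
      rw [norm_div, norm_pow, Complex.norm_natCast]
    rw [funext this]
    exact Real.summable_pow_div_factorial ‖c‖
  have hprod : Summable fun p : ℕ × ℕ =>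
      a ^ p.1 / ((p.1)! : ℂ) * (b ^ p.2 / ((p.2)! : ℂ)) :=
    summable_mul_of_summable_norm (f := fun n : ℕ => a ^ n / ((n)! : ℂ))
      (g := fun n : ℕ => b ^ n / ((n)! : ℂ)) (hnorm a) (hnorm b)
  have hexp : Complex.exp (Complex.I * t * Real.cos θ)
      = ∑' p : ℕ × ℕ, a ^ p.1 / ((p.1)! : ℂ) * (b ^ p.2 / ((p.2)! : ℂ)) := by
    rw [← tsum_mul_tsum_of_summable_norm (f := fun n : ℕ => a ^ n / ((n)! : ℂ))
      (g := fun n : ℕ => b ^ n / ((n)! : ℂ)) (hnorm a) (hnorm b)]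
    have h1 : Complex.exp a = ∑' n : ℕ, a ^ n / ((n)! : ℂ) := by
      rw [Complex.exp_eq_exp_ℂ, NormedSpace.exp_eq_tsum_div]
    have h2 : Complex.exp b = ∑' n : ℕ, b ^ n / ((n)! : ℂ) := by
      rw [Complex.exp_eq_exp_ℂ, NormedSpace.exp_eq_tsum_div]
    rw [← h1, ← h2, ← Complex.exp_add]
    congr 1
    have hzinv : z⁻¹ = -Complex.I * Complex.exp (-(θ * Complex.I)) := by
      rw [hzdef, mul_inv, Complex.inv_I, ← Complex.exp_neg]
    rw [ha, hb, hzinv, hzdef, Complex.ofReal_cos, Complex.cos]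
    push_cast
    ring
  have hH : Summable fun x : Σ _ : ℤ, ℕ =>
      a ^ (x.2 + x.1.toNat) / (((x.2 + x.1.toNat))! : ℂ) *
        (b ^ (x.2 + (-x.1).toNat) / (((x.2 + (-x.1).toNat))! : ℂ)) :=
    (jaEquiv.symm.summable_iff).mpr hprod
  have hre : (∑' p : ℕ × ℕ, a ^ p.1 / ((p.1)! : ℂ) * (b ^ p.2 / ((p.2)! : ℂ)))
      = ∑' x : Σ _ : ℤ, ℕ,
          a ^ (x.2 + x.1.toNat) / (((x.2 + x.1.toNat))! : ℂ) *
            (b ^ (x.2 + (-x.1).toNat) / (((x.2 + (-x.1).toNat))! : ℂ)) :=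
    (jaEquiv.symm.tsum_eq fun p : ℕ × ℕ =>
      a ^ p.1 / ((p.1)! : ℂ) * (b ^ p.2 / ((p.2)! : ℂ))).symm
  have hsig : (∑' x : Σ _ : ℤ, ℕ,
      a ^ (x.2 + x.1.toNat) / (((x.2 + x.1.toNat))! : ℂ) *
        (b ^ (x.2 + (-x.1).toNat) / (((x.2 + (-x.1).toNat))! : ℂ)))
      = ∑' s : ℤ, ∑' k : ℕ,
          a ^ (k + s.toNat) / (((k + s.toNat))! : ℂ) *
            (b ^ (k + (-s).toNat) / (((k + (-s).toNat))! : ℂ)) :=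
    hH.tsum_sigma
  set R : ℤ → ℂ := fun s => Complex.I ^ s * (besselJ s t : ℂ) *
    Complex.exp (Complex.I * s * θ) with hR
  have hinner : ∀ s : ℤ, (∑' k : ℕ,
      a ^ (k + s.toNat) / (((k + s.toNat))! : ℂ) *
        (b ^ (k + (-s).toNat) / (((k + (-s).toNat))! : ℂ))) = R s := by
    intro s
    rw [ha, hb, ja_inner_sum t z hz0 s, hR]
    have hzs : z ^ s = Complex.I ^ s * Complex.exp (Complex.I * s * θ) := by
      rw [hzdef, mul_zpow, ← Complex.exp_int_mul]
      congr 2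
      push_cast
      ring
    rw [hzs]
    ring
  have hRsum : Summable R := by
    rw [← funext hinner]
    exact hH.sigma
  calc Complex.exp (Complex.I * t * Real.cos θ)
      = ∑' s : ℤ, R s := by rw [hexp, hre, hsig, tsum_congr hinner]
    _ = (∑' s : ({0} : Set ℤ), R s) + ∑' s : ↥({0}ᶜ : Set ℤ), R s :=
        (hRsum.tsum_subtype_add_tsum_subtype_compl {0}).symm
    _ = (besselJ 0 t : ℂ) + ∑' s : {s : ℤ // s ≠ 0},
          Complex.I ^ (s : ℤ) * (besselJ s t : ℂ) * Complex.exp (Complex.I * (s : ℤ) * θ) := by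
      congr 1
      rw [tsum_singleton 0 R, hR]
      simp
end

section
/- Let N be even, N ≥ 2, and θ_n = 2π(n−1)/N. Then for every z = |z|(cos φ, sin φ) ∈ ℝ², Σ_{n=1}^N e^{2ik|z|cos(θ_n − φ)} = N (J_0(2k|z|) + Σ_{m∈ℤ, m≠0} i^{mN} J_{mN}(2k|z|) e^{−imNφ}). In particular the artifact term Φ_3 of the imaging function equals (C/τ)(J_0(2k|z|) + Σ_{m≠0} i^{mN} J_{mN}(2k|z|) e^{−imNφ}). -/
open Complex Real Filter MeasureTheory

/-! ### Auxiliary material for the Jacobi–Anger expansion -/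

/-- Term of the double exponential series for `exp (u t) * exp (-u/t)`. -/
noncomputable def jaT (u : ℂ) (p : ℕ × ℕ) : ℂ :=
  u ^ p.1 * (-u) ^ p.2 / ((p.1.factorial : ℂ) * (p.2.factorial : ℂ))

/-- Reindexing `ℕ × ℕ` by the difference of the indices and the minimum. -/
def jaE : ℤ × ℕ ≃ ℕ × ℕ where
  toFun q := (q.2 + q.1.toNat, q.2 + (-q.1).toNat)
  invFun p := ((p.1 : ℤ) - (p.2 : ℤ), min p.1 p.2)
  left_inv q := by
    obtain ⟨s, b⟩ := q
    simp only [Prod.mk.injEq]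
    constructor <;> omega
  right_inv p := by
    obtain ⟨a, b⟩ := p
    simp only [Prod.mk.injEq]
    constructor <;> omega

lemma jaE_sub (q : ℤ × ℕ) :
    (((jaE q).1 : ℤ) - ((jaE q).2 : ℤ)) = q.1 := by
  obtain ⟨s, b⟩ := q
  simp only [jaE, Equiv.coe_fn_mk]
  omega

lemma summable_norm_jaT (u : ℂ) : Summable (fun p : ℕ × ℕ => ‖jaT u p‖) := by
  have h1 : Summable (fun a : ℕ => ‖u‖ ^ a / a.factorial) :=
    Real.summable_pow_div_factorial _
  have := h1.mul_of_nonneg h1 (fun a => by positivity) (fun a => by positivity)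
  apply this.congr
  intro p
  simp only [jaT, norm_div, norm_mul, norm_pow, norm_neg, Complex.norm_natCast]
  rw [div_mul_div_comm]

lemma summable_jaT_mul (u : ℂ) (c : ℕ × ℕ → ℂ) (B : ℝ) (hB : ∀ p, ‖c p‖ ≤ B) :
    Summable (fun p : ℕ × ℕ => jaT u p * c p) := by
  apply Summable.of_norm_bounded ((summable_norm_jaT u).mul_right B)
  intro p
  rw [norm_mul]
  exact mul_le_mul_of_nonneg_left (hB p) (norm_nonneg _)

lemma besselJ_eq_tsum_jaT (s : ℤ) (x : ℝ) :
    (besselJ s x : ℂ) = ∑' b : ℕ, jaT ((x : ℂ) / 2) (b + s.toNat, b + (-s).toNat) := by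
  by_cases hs : 0 ≤ s
  · have h0 : (-s).toNat = 0 := by omega
    rw [besselJ, if_pos hs, Complex.ofReal_tsum]
    refine tsum_congr fun m => ?_
    simp only [jaT, h0, Nat.add_zero]
    rw [show -((x : ℂ) / 2) = (-1) * ((x : ℂ) / 2) by ring, mul_pow]
    push_cast
    ring
  · have h0 : s.toNat = 0 := by omega
    have h1 : (-s).toNat = s.natAbs := by omega
    rw [besselJ, if_neg hs, Complex.ofReal_mul, Complex.ofReal_tsum, ← tsum_mul_left]
    refine tsum_congr fun m => ?_
    simp only [jaT, h0, h1, Nat.add_zero]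
    rw [show -((x : ℂ) / 2) = (-1) * ((x : ℂ) / 2) by ring, mul_pow]
    push_cast
    ring

lemma summable_norm_expser (z : ℂ) : Summable (fun n : ℕ => ‖z ^ n / (n.factorial : ℂ)‖) := by
  have h1 : Summable (fun n : ℕ => ‖z‖ ^ n / n.factorial) :=
    Real.summable_pow_div_factorial _
  apply h1.congr
  intro n
  simp [norm_div, norm_pow]

lemma exp_jaT (u t : ℂ) (ht : t ≠ 0) :
    Complex.exp (u * t - u / t) =
      ∑' p : ℕ × ℕ, jaT u p * t ^ ((p.1 : ℤ) - (p.2 : ℤ)) := by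
  have hexp : ∀ z : ℂ, Complex.exp z = ∑' n : ℕ, z ^ n / n.factorial := by
    intro z
    rw [Complex.exp_eq_exp_ℂ, NormedSpace.exp_eq_tsum_div]
  rw [sub_eq_add_neg, Complex.exp_add, hexp, hexp]
  rw [tsum_mul_tsum_of_summable_norm (summable_norm_expser _) (summable_norm_expser _)]
  refine tsum_congr fun p => ?_
  obtain ⟨a, b⟩ := p
  have hz : t ^ ((a : ℤ) - (b : ℤ)) = t ^ a / t ^ b := by
    rw [zpow_sub₀ ht, zpow_natCast, zpow_natCast]
  have ha : (a.factorial : ℂ) ≠ 0 := Nat.cast_ne_zero.mpr a.factorial_ne_zero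
  have hb : (b.factorial : ℂ) ≠ 0 := Nat.cast_ne_zero.mpr b.factorial_ne_zero
  simp only [jaT, hz]
  rw [neg_pow (u / t), neg_pow u, div_pow, mul_pow]
  field_simp

lemma geomL (N : ℕ) (hN : 0 < N) (s : ℤ) :
    ∑ n : Fin N, Complex.exp (Complex.I * s * (2 * π * n / N)) =
      if (N : ℤ) ∣ s then (N : ℂ) else 0 := by
  have hNC : ((N : ℂ)) ≠ 0 := Nat.cast_ne_zero.mpr hN.ne'
  set ζ : ℂ := Complex.exp (2 * π * Complex.I * s / N) with hζ
  have hterm : ∀ n : Fin N, Complex.exp (Complex.I * s * (2 * π * n / N)) = ζ ^ (n : ℕ) := by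
    intro n
    rw [hζ, ← Complex.exp_nat_mul]
    congr 1
    field_simp
  rw [Finset.sum_congr rfl (fun n _ => hterm n)]
  by_cases hdvd : (N : ℤ) ∣ s
  · have hζ1 : ζ = 1 := by
      obtain ⟨c, hc⟩ := hdvd
      rw [hζ, hc]
      push_cast
      rw [show 2 * π * Complex.I * ((N : ℂ) * c) / N = c * (2 * π * Complex.I) by
        field_simp]
      exact Complex.exp_int_mul_two_pi_mul_I c
    simp [hζ1, if_pos hdvd]
  · have h2 : (2 : ℂ) * π * Complex.I ≠ 0 := by
      simp [Real.pi_ne_zero, Complex.I_ne_zero, Complex.ofReal_ne_zero]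
    have hζ1 : ζ ≠ 1 := by
      intro h
      rw [hζ, Complex.exp_eq_one_iff] at h
      obtain ⟨m, hm⟩ := h
      apply hdvd
      refine ⟨m, ?_⟩
      have h4 := congrArg (· * (N : ℂ)) hm
      simp only [div_mul_cancel₀ _ hNC] at h4
      have h5 : (2 * π * Complex.I) * (s : ℂ) = (2 * π * Complex.I) * ((N : ℂ) * m) := by
        linear_combination h4
      have h6 := mul_left_cancel₀ h2 h5
      exact_mod_cast h6
    have hζN : ζ ^ N = 1 := by
      rw [hζ, ← Complex.exp_nat_mul]
      rw [show (N : ℂ) * (2 * π * Complex.I * s / N) = s * (2 * π * Complex.I) by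
        field_simp]
      exact Complex.exp_int_mul_two_pi_mul_I s
    rw [Fin.sum_univ_eq_sum_range, geom_sum_eq hζ1, hζN]
    simp [hdvd]

/-- Structure of the artifact term `Φ₃`: for an even number of uniformly distributed antennas,
only Bessel orders divisible by `N` survive in the expansion of `Σ_n e^{2ik θ_n · z}`. -/
theorem stmt15 (N : ℕ) (hN : 2 ≤ N) (hNe : Even N) (θ : Fin N → ℝ)
    (hθ : ∀ n : Fin N, θ n = 2 * π * (n : ℝ) / N)
    (k r φ : ℝ) (hk : 0 < k) (hr : 0 ≤ r) (C τ : ℂ) (hτ : τ ≠ 0) :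
    ∑ n : Fin N, Complex.exp (Complex.I * ((2 * k * r : ℝ) : ℂ) *
        ((Real.cos (θ n - φ) : ℝ) : ℂ)) =
      (N : ℂ) * ((besselJ 0 (2 * k * r) : ℂ) + ∑' m : {m : ℤ // m ≠ 0},
        Complex.I ^ ((m : ℤ) * N) * (besselJ ((m : ℤ) * N) (2 * k * r) : ℂ) *
          Complex.exp (-Complex.I * (m : ℤ) * (N : ℂ) * (φ : ℂ))) ∧
    (C / τ) * ((besselJ 0 (2 * k * r) : ℂ) + ∑' m : {m : ℤ // m ≠ 0},
        Complex.I ^ ((m : ℤ) * N) * (besselJ ((m : ℤ) * N) (2 * k * r) : ℂ) *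
          Complex.exp (-Complex.I * (m : ℤ) * (N : ℂ) * (φ : ℂ))) =
      (C / (τ * N)) * ∑ n : Fin N, Complex.exp (Complex.I * ((2 * k * r : ℝ) : ℂ) *
        ((Real.cos (θ n - φ) : ℝ) : ℂ)) := by
  have hN0 : 0 < N := by omega
  have hNC : ((N : ℂ)) ≠ 0 := Nat.cast_ne_zero.mpr hN0.ne'
  set x : ℝ := 2 * k * r with hx
  set u : ℂ := (x : ℂ) / 2 with hu
  set t : Fin N → ℂ := fun n => Complex.I * Complex.exp (((θ n - φ : ℝ) : ℂ) * Complex.I)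
    with htdef
  have ht : ∀ n, t n ≠ 0 := fun n => mul_ne_zero Complex.I_ne_zero (Complex.exp_ne_zero _)
  -- the function of Bessel orders appearing in the statement
  set g : ℤ → ℂ := fun m => Complex.I ^ (m * (N : ℤ)) * (besselJ (m * (N : ℤ)) x : ℂ) *
    Complex.exp (-Complex.I * (m : ℂ) * (N : ℂ) * (φ : ℂ)) with hg
  -- the filter function coming from the geometric sums
  set F : ℤ → ℂ := fun s => Complex.I ^ s * Complex.exp (-Complex.I * (s : ℂ) * (φ : ℂ)) *
    (if (N : ℤ) ∣ s then (N : ℂ) else 0) with hF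
  have hFnorm : ∀ s : ℤ, ‖F s‖ ≤ (N : ℝ) := by
    intro s
    have h1 : ‖(Complex.I : ℂ) ^ s‖ = 1 := by
      rw [norm_zpow, Complex.norm_I, one_zpow]
    have h2 : ‖Complex.exp (-Complex.I * (s : ℂ) * (φ : ℂ))‖ = 1 := by
      rw [show -Complex.I * (s : ℂ) * (φ : ℂ) = ((-(s * φ) : ℝ) : ℂ) * Complex.I by
        push_cast; ring]
      rw [Complex.norm_exp_ofReal_mul_I]
    rw [hF]
    simp only [norm_mul, h1, h2, one_mul]
    split_ifs
    · simp
    · simp [Nat.cast_nonneg]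
  -- the master summable family
  have hmaster : Summable (fun p : ℕ × ℕ => jaT u p * F ((p.1 : ℤ) - (p.2 : ℤ))) :=
    summable_jaT_mul u _ (N : ℝ) (fun p => hFnorm _)
  -- Step 1: each exponential as a double series
  have hstep1 : ∀ n : Fin N,
      Complex.exp (Complex.I * (x : ℂ) * ((Real.cos (θ n - φ) : ℝ) : ℂ)) =
        ∑' p : ℕ × ℕ, jaT u p * t n ^ ((p.1 : ℤ) - (p.2 : ℤ)) := by
    intro n
    rw [← exp_jaT u (t n) (ht n)]
    congr 1
    rw [Complex.ofReal_cos, Complex.cos, htdef]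
    simp only []
    rw [div_eq_mul_inv u, mul_inv, Complex.inv_I, ← Complex.exp_neg]
    rw [hu]; ring
  -- Step 2: geometric sums of powers of `t n`
  have hts : ∀ s : ℤ, ∑ n : Fin N, t n ^ s = F s := by
    intro s
    have h1 : ∀ n : Fin N, t n ^ s =
        Complex.I ^ s * Complex.exp (-Complex.I * (s : ℂ) * (φ : ℂ)) *
          Complex.exp (Complex.I * s * (2 * π * n / N)) := by
      intro n
      rw [htdef]
      simp only []
      rw [mul_zpow, ← Complex.exp_int_mul, mul_assoc, ← Complex.exp_add]
      congr 2
      rw [hθ n]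
      push_cast
      ring
    rw [Finset.sum_congr rfl (fun n _ => h1 n), ← Finset.mul_sum, geomL N hN0 s, hF]
  -- Step 3: swap the finite sum and the series
  have hstep3 :
      ∑ n : Fin N, Complex.exp (Complex.I * (x : ℂ) * ((Real.cos (θ n - φ) : ℝ) : ℂ)) =
        ∑' p : ℕ × ℕ, jaT u p * F ((p.1 : ℤ) - (p.2 : ℤ)) := by
    rw [Finset.sum_congr rfl (fun n _ => hstep1 n)]
    rw [← Summable.tsum_finsetSum (fun n _ => summable_jaT_mul u _ 1 (fun p => by
      rw [norm_zpow, htdef]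
      simp only [norm_mul, Complex.norm_I, one_mul]
      rw [show ((θ n - φ : ℝ) : ℂ) * Complex.I = ((θ n - φ : ℝ) : ℂ) * Complex.I from rfl]
      rw [Complex.norm_exp_ofReal_mul_I, one_zpow]))]
    refine tsum_congr fun p => ?_
    rw [← Finset.mul_sum, hts]
  -- Step 4: reindex by the order and sum fibers to Bessel functions
  have hstep4 :
      ∑' p : ℕ × ℕ, jaT u p * F ((p.1 : ℤ) - (p.2 : ℤ)) =
        ∑' s : ℤ, (besselJ s x : ℂ) * F s := by
    rw [← jaE.tsum_eq (fun p : ℕ × ℕ => jaT u p * F ((p.1 : ℤ) - (p.2 : ℤ)))]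
    have hq : ∀ q : ℤ × ℕ, jaT u (jaE q) * F (((jaE q).1 : ℤ) - ((jaE q).2 : ℤ)) =
        jaT u (jaE q) * F q.1 := by
      intro q; rw [jaE_sub]
    rw [tsum_congr hq]
    have hsum : Summable (fun q : ℤ × ℕ => jaT u (jaE q) * F q.1) := by
      have := (jaE.summable_iff
        (f := fun p : ℕ × ℕ => jaT u p * F ((p.1 : ℤ) - (p.2 : ℤ)))).mpr hmaster
      exact this.congr fun q => by rw [Function.comp_apply, jaE_sub]
    rw [Summable.tsum_prod hsum]
    refine tsum_congr fun s => ?_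
    have h2 : ∑' b : ℕ, jaT u (jaE (s, b)) * F (s, b).1 =
        (∑' b : ℕ, jaT u (jaE (s, b))) * F s :=
      tsum_mul_right (f := fun b : ℕ => jaT u (jaE (s, b))) (a := F s)
    rw [h2]
    congr 1
    rw [besselJ_eq_tsum_jaT s x]
    rfl
  -- Step 5: only multiples of `N` survive
  have hinj : Function.Injective (fun m : ℤ => m * (N : ℤ)) := fun a b hab => by
    have hNZ : (N : ℤ) ≠ 0 := by exact_mod_cast hN0.ne'
    exact mul_right_cancel₀ hNZ hab
  have hrange : Function.support (fun s : ℤ => (besselJ s x : ℂ) * F s) ⊆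
      Set.range (fun m : ℤ => m * (N : ℤ)) := by
    intro s hs
    by_contra hc
    apply hs
    have hnd : ¬ (N : ℤ) ∣ s := by
      rintro ⟨c, hc2⟩
      exact hc ⟨c, by rw [hc2]; ring⟩
    simp [hF, hnd]
  have hterm5 : ∀ m : ℤ, (besselJ (m * (N : ℤ)) x : ℂ) * F (m * (N : ℤ)) = (N : ℂ) * g m := by
    intro m
    have hdvd : (N : ℤ) ∣ m * (N : ℤ) := ⟨m, mul_comm _ _⟩
    rw [hF, hg]
    simp only [if_pos hdvd]
    have hcast : ((m * (N : ℤ) : ℤ) : ℂ) = (m : ℂ) * (N : ℂ) := by push_cast; ring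
    rw [hcast]
    ring_nf
  have hstep5 : ∑' s : ℤ, (besselJ s x : ℂ) * F s = ∑' m : ℤ, (N : ℂ) * g m := by
    rw [← hinj.tsum_eq hrange]
    exact tsum_congr fun m => hterm5 m
  -- summability of the order sums
  have hsum' : Summable (fun q : ℤ × ℕ => jaT u (jaE q) * F q.1) := by
    have := (jaE.summable_iff
      (f := fun p : ℕ × ℕ => jaT u p * F ((p.1 : ℤ) - (p.2 : ℤ)))).mpr hmaster
    exact this.congr fun q => by rw [Function.comp_apply, jaE_sub]
  have houter : Summable (fun s : ℤ => ∑' b : ℕ, jaT u (jaE (s, b)) * F (s, b).1) :=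
    (hsum'.hasSum.prod_fiberwise (fun s => (hsum'.prod_factor s).hasSum)).summable
  have hsumZ : Summable (fun s : ℤ => (besselJ s x : ℂ) * F s) := by
    apply houter.congr
    intro s
    have h2 : ∑' b : ℕ, jaT u (jaE (s, b)) * F (s, b).1 =
        (∑' b : ℕ, jaT u (jaE (s, b))) * F s :=
      tsum_mul_right (f := fun b : ℕ => jaT u (jaE (s, b))) (a := F s)
    rw [h2]
    congr 1
    rw [besselJ_eq_tsum_jaT s x]
    rfl
  have hgsum : Summable g := by
    have h1 : Summable (fun m : ℤ => (N : ℂ) * g m) :=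
      ((hsumZ.comp_injective hinj).congr (fun m => hterm5 m))
    have h2 := h1.mul_left ((N : ℂ)⁻¹)
    apply h2.congr
    intro m
    field_simp
  -- split off the `m = 0` term
  have hg0 : g 0 = (besselJ 0 x : ℂ) := by
    rw [hg]
    simp
  have hsplit : ∑' m : ℤ, g m = g 0 + ∑' m : {m : ℤ // m ≠ 0}, g ↑m := by
    rw [Summable.tsum_eq_add_tsum_ite hgsum 0]
    congr 1
    have hval : Function.Injective (Subtype.val : {m : ℤ // m ≠ 0} → ℤ) :=
      Subtype.val_injective
    have hsupp : Function.support (fun m : ℤ => if m = 0 then 0 else g m) ⊆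
        Set.range (Subtype.val : {m : ℤ // m ≠ 0} → ℤ) := by
      intro s hs
      rcases eq_or_ne s 0 with h | h
      · simp [h] at hs
      · exact ⟨⟨s, h⟩, rfl⟩
    rw [← hval.tsum_eq hsupp]
    exact tsum_congr fun m => by simp [m.2]
  have key : ∑ n : Fin N, Complex.exp (Complex.I * (x : ℂ) * ((Real.cos (θ n - φ) : ℝ) : ℂ)) =
      (N : ℂ) * ((besselJ 0 x : ℂ) + ∑' m : {m : ℤ // m ≠ 0},
        Complex.I ^ ((m : ℤ) * N) * (besselJ ((m : ℤ) * N) x : ℂ) *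
          Complex.exp (-Complex.I * (m : ℤ) * (N : ℂ) * (φ : ℂ))) := by
    rw [hstep3, hstep4, hstep5, tsum_mul_left, hsplit, hg0]
  refine ⟨key, ?_⟩
  rw [key]
  field_simp
  congr 2
  exact tsum_congr fun m => by ring
end
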